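/- Let N be a rooted binary phylogenetic network on X, let A ⊆ X, and let v be a reticulation of N. If a parent of v is a vertex of the exhibited network N_A, then v is also a vertex of N_A. -/

import Mathlib

/-!
Let `r` be the lowest stable ancestor of `A` and `P` the path graph of `N` on `A`, so that `N_A`
arises from `P` by simplification steps. Along these steps no degree increases and no positive
degree drops to zero, so a vertex of in- and out-degree one keeps these degrees until it is
suppressed; as no step applies to `N_A`, such a vertex of `P` is never a vertex of `N_A`.

If the arc `(p, v)` were not in `P`, then `p` would either be `r`, whose other child would then be
a stable ancestor below `r`, or a vertex of in- and out-degree one in `P`. Hence `(p, v)` lies in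
`P`, and so do all in-arcs of `v`, since a root path through any of them passes `r`. Along the
simplification `v` keeps in-degree two: its in-arcs could only become two parallel copies of
`(p, v)`, and deleting one would leave `p` with in- and out-degree one or, if `p = r`, would leave
no path from `r` avoiding `v`, although `v` is not a stable ancestor. Only vertices of in-degree
one are suppressed, so `v` survives.
-/

open scoped Classical

/-- A directed graph with a finite vertex set and a multiset of arcs
(so that parallel arcs can be represented). -/
structure Digraph' (α : Type*) where
  V : Finset α
  E : Multiset (α × α)

namespace Digraph'

variable {α : Type*} [DecidableEq α]

/-- In-degree of a vertex. -/
noncomputable def inDeg (G : Digraph' α) (v : α) : ℕ :=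
  (G.E.filter (fun e => e.2 = v)).card

/-- Out-degree of a vertex. -/
noncomputable def outDeg (G : Digraph' α) (v : α) : ℕ :=
  (G.E.filter (fun e => e.1 = v)).card

/-- A (directed) path, given as its nonempty list of vertices. -/
def IsPath (G : Digraph' α) (p : List α) : Prop :=
  p ≠ [] ∧ (∀ v ∈ p, v ∈ G.V) ∧ p.Chain' (fun u v => (u, v) ∈ G.E)

/-- A directed path from `u` to `v`. -/
def PathFrom (G : Digraph' α) (u v : α) (p : List α) : Prop :=
  G.IsPath p ∧ p.head? = some u ∧ p.getLast? = some v

/-- There is a directed path from `u` to `v` (possibly trivial). -/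
def Reaches (G : Digraph' α) (u v : α) : Prop := ∃ p, G.PathFrom u v p

/-- Acyclicity: no arc whose head reaches its tail. -/
def Acyclic (G : Digraph' α) : Prop := ∀ e ∈ G.E, ¬ G.Reaches e.2 e.1

/-- `u` is a stable ancestor of `X'` (w.r.t. root `ρ`): every path from
`ρ` to each `x ∈ X'` traverses `u`. -/
def StableAncestor (G : Digraph' α) (ρ : α) (X' : Finset α) (u : α) : Prop :=
  ∀ x ∈ X', ∀ p, G.PathFrom ρ x p → u ∈ p

/-- `u` is a lowest stable ancestor of `X'`: it is a stable ancestor and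
no distinct stable ancestor of `X'` is a descendant of `u`. -/
def IsLowestSA (G : Digraph' α) (ρ : α) (X' : Finset α) (u : α) : Prop :=
  G.StableAncestor ρ X' u ∧
    ∀ v, G.StableAncestor ρ X' v → v ≠ u → ¬ G.Reaches u v

/-- Delete a vertex together with all incident arcs. -/
noncomputable def deleteVertex (G : Digraph' α) (w : α) : Digraph' α :=
  ⟨G.V.erase w, G.E.filter (fun e => e.1 ≠ w ∧ e.2 ≠ w)⟩

/-- `G'` is obtained from `G` by suppressing the in-degree-one
out-degree-one vertex `w` (replacing `(p,w)`, `(w,c)` by the arc `(p,c)`). -/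
def Suppress (G : Digraph' α) (w : α) (G' : Digraph' α) : Prop :=
  G.inDeg w = 1 ∧ G.outDeg w = 1 ∧
  ∃ p c, (p, w) ∈ G.E ∧ (w, c) ∈ G.E ∧
    G'.V = G.V.erase w ∧ G'.E = (G.deleteVertex w).E + {(p, c)}

/-- `G'` is obtained from `G` by deleting exactly one arc of a pair of
parallel arcs. -/
def DeleteParallel (G G' : Digraph' α) : Prop :=
  ∃ e : α × α, 2 ≤ G.E.count e ∧ G'.V = G.V ∧ G'.E = G.E.erase e

/-- One simplification step: suppress a degree-(1,1) vertex or delete a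
parallel arc. -/
def SimpStep (G G' : Digraph' α) : Prop :=
  (∃ w, G.Suppress w G') ∨ G.DeleteParallel G'

/-- `G'` is the full simplification of `G`. -/
def FullSimp (G G' : Digraph' α) : Prop :=
  Relation.ReflTransGen (SimpStep (α := α)) G G' ∧ ∀ G'', ¬ SimpStep G' G''

/-- The path graph of `G` on `A` (w.r.t. the vertex `r`): all vertices and
arcs lying on a directed path from `r` to a leaf in `A`. -/
noncomputable def pathGraph (G : Digraph' α) (r : α) (A : Finset α) : Digraph' α :=
  ⟨G.V.filter (fun v => ∃ x ∈ A, ∃ p, G.PathFrom r x p ∧ v ∈ p),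
   G.E.filter (fun e => ∃ x ∈ A, ∃ p, G.PathFrom r x p ∧ e ∈ p.zip p.tail)⟩

/-- Isomorphism of digraphs fixing every element of `A`. -/
def IsoOn (G1 G2 : Digraph' α) (A : Finset α) : Prop :=
  ∃ φ : α → α, Set.BijOn φ ↑G1.V ↑G2.V ∧ (∀ x ∈ A, φ x = x) ∧
    G2.E = G1.E.map (fun e => (φ e.1, φ e.2))

end Digraph'

/-- A rooted binary phylogenetic network on the leaf set `X`. -/
structure PhyloNet (α : Type*) where
  G : Digraph' α
  root : α
  X : Finset α
  root_mem : root ∈ G.V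
  wf : ∀ e ∈ G.E, e.1 ∈ G.V ∧ e.2 ∈ G.V
  noParallel : ∀ e : α × α, G.E.count e ≤ 1
  acyclic : G.Acyclic
  reach : ∀ v ∈ G.V, G.Reaches root v
  binary :
    (G.V = {root} ∧ G.E = 0 ∧ X = {root}) ∨
    (G.inDeg root = 0 ∧ G.outDeg root = 2 ∧
     (∀ x ∈ X, x ∈ G.V ∧ G.inDeg x = 1 ∧ G.outDeg x = 0) ∧
     (∀ v ∈ G.V, G.outDeg v = 0 → v ∈ X) ∧
     (∀ v ∈ G.V, v ≠ root → v ∉ X →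
       (G.inDeg v = 1 ∧ G.outDeg v = 2) ∨ (G.inDeg v = 2 ∧ G.outDeg v = 1)))

namespace PhyloNet

variable {α : Type*} [DecidableEq α]

/-- `N` is recoverable: the root is the only stable ancestor of `X`. -/
def Recoverable (N : PhyloNet α) : Prop :=
  ∀ v, N.G.StableAncestor N.root N.X v → v = N.root

/-- `{a, b}` is a cherry: two distinct leaves with a common parent. -/
def Cherry (N : PhyloNet α) (a b : α) : Prop :=
  a ∈ N.X ∧ b ∈ N.X ∧ a ≠ b ∧ ∃ p, (p, a) ∈ N.G.E ∧ (p, b) ∈ N.G.E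

/-- `(a, b)` is a reticulated cherry: leaves `a, b` whose parents `p_a, p_b`
satisfy that `(p_a, p_b)` is an arc and `p_b` is a reticulation. -/
def RetCherry (N : PhyloNet α) (a b : α) : Prop :=
  a ∈ N.X ∧ b ∈ N.X ∧ a ≠ b ∧
  ∃ pa pb, (pa, a) ∈ N.G.E ∧ (pb, b) ∈ N.G.E ∧ (pa, pb) ∈ N.G.E ∧
    N.G.inDeg pb = 2

/-- `N'` is obtained from `N` by reducing the leaf `b` of the cherry `{a, b}`:
delete `b` and its incident arc and suppress the resulting degree-two
vertex (or, if the common parent is the root, replace `N` by the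
single-vertex network on `a`). -/
def ReduceCherry (N : PhyloNet α) (a b : α) (N' : PhyloNet α) : Prop :=
  N.Cherry a b ∧ N'.X = N.X.erase b ∧
  ∃ p, (p, a) ∈ N.G.E ∧ (p, b) ∈ N.G.E ∧
    ((p = N.root ∧ N'.G.V = {a} ∧ N'.G.E = 0 ∧ N'.root = a) ∨
     (p ≠ N.root ∧ N'.root = N.root ∧ (N.G.deleteVertex b).Suppress p N'.G))

/-- `N'` is obtained from `N` by cutting the reticulated cherry `(a, b)`:
delete the reticulation arc `(p_a, p_b)` and suppress the two resulting
degree-two vertices. -/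
def CutRetCherry (N : PhyloNet α) (a b : α) (N' : PhyloNet α) : Prop :=
  a ∈ N.X ∧ b ∈ N.X ∧ a ≠ b ∧ N'.X = N.X ∧ N'.root = N.root ∧
  ∃ pa pb, (pa, a) ∈ N.G.E ∧ (pb, b) ∈ N.G.E ∧ (pa, pb) ∈ N.G.E ∧
    N.G.inDeg pb = 2 ∧
    ∃ G1 : Digraph' α, G1.V = N.G.V ∧ G1.E = N.G.E.erase (pa, pb) ∧
      ∃ G2 : Digraph' α, G1.Suppress pa G2 ∧ G2.Suppress pb N'.G

/-- One cherry-picking step: reduce a leaf of a cherry or cut a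
reticulated cherry. -/
def PickStep (N N' : PhyloNet α) : Prop :=
  (∃ a b, N.ReduceCherry a b N') ∨ (∃ a b, N.CutRetCherry a b N')

/-- `N` is an orchard network: some sequence of cherry-picking operations
reduces it to a single vertex. -/
def IsOrchard (N : PhyloNet α) : Prop :=
  ∃ M : PhyloNet α, Relation.ReflTransGen (PickStep (α := α)) N M ∧ M.G.V.card = 1

/-- `H` is the network exhibited by `N` on `A`: the full simplification of
the path graph of `N` on `A`, rooted at the lowest stable ancestor of `A`. -/
def Exhibits (N : PhyloNet α) (A : Finset α) (H : Digraph' α) : Prop :=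
  ∃ r, N.G.IsLowestSA N.root A r ∧ Digraph'.FullSimp (N.G.pathGraph r A) H

end PhyloNet

namespace List

variable {β : Type*}

theorem mem_zip_tail_iff {l : List β} {a b : β} :
    (a, b) ∈ l.zip l.tail ↔ ∃ s t, l = s ++ a :: b :: t := by
  induction l with
  | nil => simp
  | cons c l ih =>
    cases l with
    | nil =>
      simp only [tail_cons, zip_nil_right, not_mem_nil, false_iff, not_exists]
      rintro (_ | ⟨_, _ | _⟩) t h <;> simp at h
    | cons d l =>
      have hzip : (c :: d :: l).zip (c :: d :: l).tail = (c, d) :: (d :: l).zip (d :: l).tail :=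
        rfl
      rw [hzip, mem_cons, ih]
      constructor
      · rintro (h | ⟨s, t, h⟩)
        · obtain ⟨rfl, rfl⟩ := Prod.mk.inj h
          exact ⟨[], l, rfl⟩
        · exact ⟨c :: s, t, by rw [h, cons_append]⟩
      · rintro ⟨_ | ⟨c', s⟩, t, h⟩
        · simp_all
        · simp only [cons_append, cons.injEq] at h
          exact Or.inr ⟨s, t, h.2⟩

theorem isChain_iff_forall_mem_zip_tail {R : β → β → Prop} {l : List β} :
    l.IsChain R ↔ ∀ a b, (a, b) ∈ l.zip l.tail → R a b := by
  simp only [isChain_iff_forall_rel_of_append_cons_cons, mem_zip_tail_iff]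
  grind

end List

theorem Relation.ReflTransGen.of_bypass {β : Type*} {R R' : β → β → Prop} {w a x : β}
    (hkeep : ∀ a b, a ≠ w → b ≠ w → R a b → R' a b)
    (hskip : ∀ a b, a ≠ w → b ≠ w → R a w → R w b → R' a b)
    (h : Relation.ReflTransGen R a x) (ha : a ≠ w) (hx : x ≠ w) :
    Relation.ReflTransGen R' a x := by
  -- strengthened so that a step into `w` can be completed by the step out of it
  suffices ∀ a', a' ≠ w → (a' = a ∨ a = w ∧ R a' w) → Relation.ReflTransGen R' a' x from
    this a ha (Or.inl rfl)
  clear ha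
  induction h using Relation.ReflTransGen.head_induction_on with
  | refl =>
    rintro a' - (rfl | ⟨rfl, -⟩)
    exacts [.refl, absurd rfl hx]
  | @head a₀ b hab _ ih =>
    rintro a' ha' (rfl | ⟨ha₀, ha'w⟩) <;> by_cases hb : b = w
    · exact ih a' ha' (Or.inr ⟨hb, hb ▸ hab⟩)
    · exact .head (hkeep _ _ ha' hb hab) (ih b hb (Or.inl rfl))
    · exact ih a' ha' (Or.inr ⟨hb, ha'w⟩)
    · exact .head (hskip _ _ ha' hb ha'w (ha₀ ▸ hab)) (ih b hb (Or.inl rfl))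

namespace Digraph'

variable {α : Type*} {G G' H : Digraph' α} {A : Finset α} {a b c p r u v w x y z ρ : α}
  {e : α × α} {l q s t : List α}

theorem PathFrom.eq_cons (h : G.PathFrom u v l) : ∃ t, l = u :: t := by
  obtain ⟨⟨hne, -, -⟩, hhead, -⟩ := h
  cases l with
  | nil => exact absurd rfl hne
  | cons a t => exact ⟨t, by simpa using hhead⟩

theorem PathFrom.eq_concat (h : G.PathFrom u v l) : ∃ s, l = s ++ [v] := by
  obtain ⟨⟨hne, -, -⟩, -, hlast⟩ := h
  rcases List.eq_nil_or_concat l with rfl | ⟨s, b, rfl⟩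
  · exact absurd rfl hne
  · exact ⟨s, by simpa using hlast⟩

theorem PathFrom.mem_left (h : G.PathFrom u v l) : u ∈ l := by
  obtain ⟨t, rfl⟩ := h.eq_cons
  exact List.mem_cons_self

theorem PathFrom.mem_right (h : G.PathFrom u v l) : v ∈ l := by
  obtain ⟨s, rfl⟩ := h.eq_concat
  simp

theorem PathFrom.mem_E (h : G.PathFrom u v l) (hab : (a, b) ∈ l.zip l.tail) : (a, b) ∈ G.E :=
  List.isChain_iff_forall_mem_zip_tail.mp h.1.2.2 a b hab

theorem PathFrom.split (h : G.PathFrom u v l) (hl : l = s ++ c :: t) :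
    G.PathFrom u c (s ++ [c]) ∧ G.PathFrom c v (c :: t) := by
  subst hl
  obtain ⟨⟨-, hV, hchain⟩, hhead, hlast⟩ := h
  change List.IsChain _ _ at hchain
  rw [List.isChain_split] at hchain
  refine ⟨⟨⟨by simp, fun y hy => hV y ?_, hchain.1⟩, ?_, by simp⟩,
    ⟨⟨by simp, fun y hy => hV y ?_, hchain.2⟩, rfl, ?_⟩⟩
  · simp only [List.mem_append, List.mem_cons, List.not_mem_nil] at hy ⊢; tauto
  · cases s <;> simpa using hhead
  · simp only [List.mem_append]; exact Or.inr hy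
  · simpa [List.getLast?_append] using hlast

theorem PathFrom.append {m : List α} (h₁ : G.PathFrom u a l) (h₂ : G.PathFrom b v m)
    (hab : (a, b) ∈ G.E) : G.PathFrom u v (l ++ m) := by
  obtain ⟨s, rfl⟩ := h₁.eq_concat
  obtain ⟨t, rfl⟩ := h₂.eq_cons
  refine ⟨⟨by simp, fun y hy => ?_, ?_⟩, ?_, ?_⟩
  · rcases List.mem_append.mp hy with hy | hy
    exacts [h₁.1.2.1 y hy, h₂.1.2.1 y hy]
  · show List.IsChain _ _
    rw [List.append_assoc, List.singleton_append, List.isChain_append_cons_cons]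
    exact ⟨h₁.1.2.2, hab, h₂.1.2.2⟩
  · simpa [List.head?_append] using h₁.2.1
  · simpa [List.getLast?_append] using h₂.2.2

theorem pathFrom_singleton (hu : u ∈ G.V) : G.PathFrom u u [u] :=
  ⟨⟨by simp, by simpa using hu, List.isChain_singleton u⟩, rfl, rfl⟩

theorem Reaches.trans (h₁ : G.Reaches a b) (h₂ : G.Reaches b c) : G.Reaches a c := by
  obtain ⟨l, hl⟩ := h₁
  obtain ⟨m, hm⟩ := h₂
  obtain ⟨_ | ⟨d, t⟩, rfl⟩ := hm.eq_cons
  · obtain rfl : b = c := by simpa using hm.2.2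
    exact ⟨l, hl⟩
  · exact ⟨_, hl.append (hm.split (s := [b]) rfl).2 (hm.mem_E (by simp))⟩

theorem Acyclic.ne_of_mem_E (hac : G.Acyclic) (h : (u, v) ∈ G.E) (hu : u ∈ G.V) : u ≠ v := by
  rintro rfl
  exact hac _ h ⟨_, pathFrom_singleton hu⟩

theorem Acyclic.not_reaches_of_reaches (hac : G.Acyclic) (huv : G.Reaches u v) (hne : u ≠ v) :
    ¬ G.Reaches v u := by
  obtain ⟨l, hl⟩ := huv
  obtain ⟨_ | ⟨z, t⟩, rfl⟩ := hl.eq_cons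
  · exact absurd (by simpa using hl.2.2) hne
  · exact fun hvu => hac _ (hl.mem_E (by simp))
      (Reaches.trans ⟨_, (hl.split (s := [u]) rfl).2⟩ hvu)

theorem PathFrom.reflTransGen_avoiding (h : G.PathFrom u w l) (hv : v ∉ l) :
    Relation.ReflTransGen (fun a b => (a, b) ∈ G.E ∧ b ≠ v) u w := by
  obtain ⟨t, rfl⟩ := h.eq_cons
  refine List.relationReflTransGen_of_exists_isChain_cons t ?_ ?_
  · refine List.isChain_iff_forall_mem_zip_tail.mpr fun a b hab => ⟨h.mem_E hab, ?_⟩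
    rintro rfl
    exact hv (List.mem_of_mem_tail (List.of_mem_zip hab).2)
  · simpa [List.getLast?_eq_some_getLast] using h.2.2

theorem mem_pathGraph_V : y ∈ (G.pathGraph r A).V ↔
    y ∈ G.V ∧ ∃ x ∈ A, ∃ q, G.PathFrom r x q ∧ y ∈ q :=
  Finset.mem_filter

theorem mem_pathGraph_E {e : α × α} : e ∈ (G.pathGraph r A).E ↔
    e ∈ G.E ∧ ∃ x ∈ A, ∃ q, G.PathFrom r x q ∧ e ∈ q.zip q.tail :=
  Multiset.mem_filter

theorem pathGraph_E_le : (G.pathGraph r A).E ≤ G.E :=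
  Multiset.filter_le _ _

theorem PathFrom.mem_pathGraph_V (hq : G.PathFrom r x q) (hx : x ∈ A) (hy : y ∈ q) :
    y ∈ (G.pathGraph r A).V :=
  Digraph'.mem_pathGraph_V.mpr ⟨hq.1.2.1 y hy, x, hx, q, hq, hy⟩

theorem PathFrom.mem_pathGraph_E (hq : G.PathFrom r x q) (hx : x ∈ A)
    (hab : (a, b) ∈ q.zip q.tail) : (a, b) ∈ (G.pathGraph r A).E :=
  Digraph'.mem_pathGraph_E.mpr ⟨hq.mem_E hab, x, hx, q, hq, hab⟩

theorem PathFrom.pathGraph (hq : G.PathFrom r x q) (hx : x ∈ A) :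
    (G.pathGraph r A).PathFrom r x q :=
  ⟨⟨hq.1.1, fun _ hy => hq.mem_pathGraph_V hx hy,
    List.isChain_iff_forall_mem_zip_tail.mpr fun _ _ hab => hq.mem_pathGraph_E hx hab⟩, hq.2⟩

theorem mem_pathGraph_V_self (hy : y ∈ (G.pathGraph r A).V) : r ∈ (G.pathGraph r A).V := by
  obtain ⟨-, x, hx, q, hq, -⟩ := mem_pathGraph_V.mp hy
  exact hq.mem_pathGraph_V hx hq.mem_left

theorem mem_pathGraph_V_of_mem_E (h : (a, b) ∈ (G.pathGraph r A).E) :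
    b ∈ (G.pathGraph r A).V := by
  obtain ⟨-, x, hx, q, hq, hab⟩ := mem_pathGraph_E.mp h
  exact hq.mem_pathGraph_V hx (List.mem_of_mem_tail (List.of_mem_zip hab).2)

theorem reaches_of_mem_pathGraph_V (hy : y ∈ (G.pathGraph r A).V) : G.Reaches r y := by
  obtain ⟨-, x, -, q, hq, hyq⟩ := mem_pathGraph_V.mp hy
  obtain ⟨s, t, hst⟩ := List.append_of_mem hyq
  exact ⟨_, (hq.split hst).1⟩

theorem exists_mem_pathGraph_E (hy : y ∈ (G.pathGraph r A).V) (hyA : y ∉ A) :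
    ∃ z, (y, z) ∈ (G.pathGraph r A).E := by
  obtain ⟨-, x, hx, q, hq, hyq⟩ := mem_pathGraph_V.mp hy
  obtain ⟨s, _ | ⟨z, t⟩, rfl⟩ := List.append_of_mem hyq
  · obtain rfl : y = x := by simpa using hq.2.2
    exact absurd hx hyA
  · exact ⟨z, hq.mem_pathGraph_E hx (List.mem_zip_tail_iff.mpr ⟨s, t, rfl⟩)⟩

theorem StableAncestor.of_forall_pathGraph_E (hSA : G.StableAncestor ρ A r) (hrA : r ∉ A)
    (h : ∀ z', (r, z') ∈ (G.pathGraph r A).E → z' = z) : G.StableAncestor ρ A z := by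
  intro x hx P hP
  obtain ⟨s, t, rfl⟩ := List.append_of_mem (hSA x hx P hP)
  have hrx := (hP.split rfl).2
  cases t with
  | nil =>
    obtain rfl : r = x := by simpa using hrx.2.2
    exact absurd hx hrA
  | cons z' t =>
    obtain rfl := h z' (hrx.mem_pathGraph_E hx (by simp))
    simp

theorem IsLowestSA.exists_pathFrom_not_mem (hLSA : G.IsLowestSA ρ A r) (hry : G.Reaches r y)
    (hyr : y ≠ r) : ∃ x ∈ A, ∃ q, G.PathFrom r x q ∧ y ∉ q := by
  have hy : ¬ G.StableAncestor ρ A y := fun hy => hLSA.2 y hy hyr hry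
  simp only [StableAncestor, not_forall] at hy
  obtain ⟨x, hx, P, hP, hyP⟩ := hy
  obtain ⟨s, t, rfl⟩ := List.append_of_mem (hLSA.1 x hx P hP)
  exact ⟨x, hx, r :: t, (hP.split rfl).2, fun h => hyP (by simp [h])⟩

variable [DecidableEq α]

theorem one_le_inDeg (h : (u, y) ∈ G.E) : 1 ≤ G.inDeg y :=
  Multiset.card_pos_iff_exists_mem.mpr ⟨_, Multiset.mem_filter.mpr ⟨h, rfl⟩⟩

theorem one_le_outDeg (h : (y, u) ∈ G.E) : 1 ≤ G.outDeg y :=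
  Multiset.card_pos_iff_exists_mem.mpr ⟨_, Multiset.mem_filter.mpr ⟨h, rfl⟩⟩

theorem inDeg_le_of_E_le (h : G'.E ≤ G.E) (y : α) : G'.inDeg y ≤ G.inDeg y :=
  Multiset.card_le_card (Multiset.filter_le_filter _ h)

theorem outDeg_le_of_E_le (h : G'.E ≤ G.E) (y : α) : G'.outDeg y ≤ G.outDeg y :=
  Multiset.card_le_card (Multiset.filter_le_filter _ h)

theorem outDeg_lt_of_E_le (h : G'.E ≤ G.E) (hyz : (y, z) ∈ G.E) (hyz' : (y, z) ∉ G'.E) :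
    G'.outDeg y < G.outDeg y := by
  refine Multiset.card_lt_card (lt_of_le_of_ne (Multiset.filter_le_filter _ h) fun heq => ?_)
  have : (y, z) ∈ G.E.filter (·.1 = y) := Multiset.mem_filter.mpr ⟨hyz, rfl⟩
  exact hyz' (Multiset.mem_of_mem_filter (heq ▸ this))

theorem pair_le_filter_fst (hyz : (y, z) ∈ G.E) (hyu : (y, u) ∈ G.E) (hzu : z ≠ u) :
    {(y, z), (y, u)} ≤ G.E.filter (·.1 = y) := by
  rw [Multiset.le_iff_subset (by simpa using hzu)]
  simp [Multiset.insert_eq_cons, Multiset.cons_subset, hyz, hyu]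

theorem two_le_outDeg (hyz : (y, z) ∈ G.E) (hyu : (y, u) ∈ G.E) (hzu : z ≠ u) :
    2 ≤ G.outDeg y :=
  Multiset.card_pair (y, z) (y, u) ▸ Multiset.card_le_card (pair_le_filter_fst hyz hyu hzu)

theorem eq_or_eq_of_outDeg_le_two (h : G.outDeg y ≤ 2) (hyz : (y, z) ∈ G.E)
    (hyu : (y, u) ∈ G.E) (hzu : z ≠ u) (hya : (y, a) ∈ G.E) : a = z ∨ a = u := by
  have heq := Multiset.eq_of_le_of_card_le (pair_le_filter_fst hyz hyu hzu)
    (by rw [Multiset.card_pair]; exact h)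
  have : (y, a) ∈ G.E.filter (·.1 = y) := Multiset.mem_filter.mpr ⟨hya, rfl⟩
  rw [← heq] at this
  simpa using this

theorem inDeg_pathGraph_self (hac : G.Acyclic) : (G.pathGraph r A).inDeg r = 0 := by
  rw [inDeg, Multiset.card_eq_zero, Multiset.filter_eq_nil]
  rintro ⟨a, b⟩ he (rfl : b = r)
  obtain ⟨hab, x, -, q, hq, hz⟩ := mem_pathGraph_E.mp he
  obtain ⟨s, t, rfl⟩ := List.mem_zip_tail_iff.mp hz
  exact hac _ hab ⟨_, (hq.split rfl).1⟩

theorem one_le_inDeg_pathGraph (hy : y ∈ (G.pathGraph r A).V) (hyr : y ≠ r) :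
    1 ≤ (G.pathGraph r A).inDeg y := by
  obtain ⟨-, x, hx, q, hq, hyq⟩ := mem_pathGraph_V.mp hy
  obtain ⟨s, t, rfl⟩ := List.append_of_mem hyq
  rcases List.eq_nil_or_concat' s with rfl | ⟨s, u, rfl⟩
  · exact absurd (by simpa using hq.2.1) hyr
  · exact one_le_inDeg (u := u)
      (hq.mem_pathGraph_E hx (List.mem_zip_tail_iff.mpr ⟨s, t, by simp⟩))

theorem count_le_outDeg (e : α × α) : G.E.count e ≤ G.outDeg e.1 := by
  have hcount : (G.E.filter (·.1 = e.1)).count e = G.E.count e :=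
    Multiset.count_filter_of_pos rfl
  exact hcount ▸ Multiset.count_le_card e _

theorem eq_of_inDeg_le_count (h : G.inDeg e.2 ≤ G.E.count e) (ha : (a, e.2) ∈ G.E) :
    (a, e.2) = e := by
  have hcount : (G.E.filter (·.2 = e.2)).count e = G.E.count e :=
    Multiset.count_filter_of_pos rfl
  have hcard := le_antisymm (Multiset.count_le_card e _) (hcount ▸ h)
  exact (Multiset.count_eq_card.mp hcard _ (Multiset.mem_filter.mpr ⟨ha, rfl⟩)).symm

theorem eq_of_outDeg_le_count (h : G.outDeg e.1 ≤ G.E.count e) (ha : (e.1, a) ∈ G.E) :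
    (e.1, a) = e := by
  have hcount : (G.E.filter (·.1 = e.1)).count e = G.E.count e :=
    Multiset.count_filter_of_pos rfl
  have hcard := le_antisymm (Multiset.count_le_card e _) (hcount ▸ h)
  exact (Multiset.count_eq_card.mp hcard _ (Multiset.mem_filter.mpr ⟨ha, rfl⟩)).symm

theorem filter_snd_eq_singleton (h : G.inDeg y = 1) (ha : (a, y) ∈ G.E) :
    G.E.filter (·.2 = y) = {(a, y)} := by
  obtain ⟨f, hf⟩ := Multiset.card_eq_one.mp h
  have : (a, y) ∈ G.E.filter (·.2 = y) := Multiset.mem_filter.mpr ⟨ha, rfl⟩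
  rw [hf, Multiset.mem_singleton] at this
  rw [hf, this]

theorem filter_fst_eq_singleton (h : G.outDeg y = 1) (ha : (y, a) ∈ G.E) :
    G.E.filter (·.1 = y) = {(y, a)} := by
  obtain ⟨f, hf⟩ := Multiset.card_eq_one.mp h
  have : (y, a) ∈ G.E.filter (·.1 = y) := Multiset.mem_filter.mpr ⟨ha, rfl⟩
  rw [hf, Multiset.mem_singleton] at this
  rw [hf, this]

theorem eq_of_inDeg_eq_one (h : G.inDeg y = 1) (ha : (a, y) ∈ G.E) (hb : (b, y) ∈ G.E) :
    b = a := by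
  have : (b, y) ∈ G.E.filter (·.2 = y) := Multiset.mem_filter.mpr ⟨hb, rfl⟩
  rw [filter_snd_eq_singleton h ha] at this
  simpa using this

theorem eq_of_outDeg_eq_one (h : G.outDeg y = 1) (ha : (y, a) ∈ G.E) (hb : (y, b) ∈ G.E) :
    b = a := by
  have : (y, b) ∈ G.E.filter (·.1 = y) := Multiset.mem_filter.mpr ⟨hb, rfl⟩
  rw [filter_fst_eq_singleton h ha] at this
  simpa using this

theorem inDeg_of_E_eq_cons (h : G.E = e ::ₘ G'.E) (y : α) :
    G.inDeg y = G'.inDeg y + if e.2 = y then 1 else 0 := by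
  simp only [inDeg, h, Multiset.filter_cons]
  split_ifs <;> simp [add_comm]

theorem outDeg_of_E_eq_cons (h : G.E = e ::ₘ G'.E) (y : α) :
    G.outDeg y = G'.outDeg y + if e.1 = y then 1 else 0 := by
  simp only [outDeg, h, Multiset.filter_cons]
  split_ifs <;> simp [add_comm]

theorem E_eq_cons_of_two_le_count (hc : 2 ≤ G.E.count e) (hE : G'.E = G.E.erase e) :
    G.E = e ::ₘ G'.E := by
  rw [hE, Multiset.cons_erase (Multiset.count_pos.mp (by omega))]

theorem mem_of_two_le_count (hc : 2 ≤ G.E.count e) (hE : G'.E = G.E.erase e)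
    {f : α × α} (hf : f ∈ G.E) : f ∈ G'.E := by
  rw [hE]
  by_cases hfe : f = e
  · rw [hfe, ← Multiset.count_pos, Multiset.count_erase_self]; omega
  · exact (Multiset.mem_erase_of_ne hfe).mpr hf

theorem Suppress.ne_of_mem (hs : G.Suppress w G') (hy : y ∈ G'.V) : y ≠ w := by
  obtain ⟨-, -, _, _, -, -, hV, -⟩ := hs
  exact Finset.ne_of_mem_erase (hV ▸ hy)

theorem Suppress.mem_V (hs : G.Suppress w G') (hy : y ∈ G.V) (hyw : y ≠ w) : y ∈ G'.V := by
  obtain ⟨-, -, _, _, -, -, hV, -⟩ := hs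
  exact hV ▸ Finset.mem_erase.mpr ⟨hyw, hy⟩

theorem Suppress.mem_E (hs : G.Suppress w G') (h : (a, b) ∈ G.E) (ha : a ≠ w) (hb : b ≠ w) :
    (a, b) ∈ G'.E := by
  obtain ⟨-, -, _, _, -, -, -, hE⟩ := hs
  rw [hE]
  exact Multiset.mem_add.mpr (Or.inl (Multiset.mem_filter.mpr ⟨h, ha, hb⟩))

theorem Suppress.mem_E_of_bypass (hs : G.Suppress w G') (ha : (a, w) ∈ G.E)
    (hb : (w, b) ∈ G.E) : (a, b) ∈ G'.E := by
  obtain ⟨h₁, h₂, p₀, c₀, hp₀, hc₀, -, hE⟩ := hs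
  obtain rfl := eq_of_inDeg_eq_one h₁ ha hp₀
  obtain rfl := eq_of_outDeg_eq_one h₂ hb hc₀
  simp [hE]

theorem Suppress.inDeg_eq (hs : G.Suppress w G') (hy : y ≠ w) : G'.inDeg y = G.inDeg y := by
  obtain ⟨-, h₂, p₀, c₀, -, hc₀, -, hE⟩ := hs
  -- an in-arc of `y` leaving `w` can only be `(w, c₀)`, and it is replaced by `(p₀, c₀)`
  have hkept : G.E.filter (fun f => f.2 = y ∧ f.1 ≠ w ∧ f.2 ≠ w) =
      G.E.filter (fun f => f.2 = y ∧ ¬ f.1 = w) :=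
    Multiset.filter_congr fun f _ => by grind
  rw [inDeg, inDeg, hE, deleteVertex]
  conv_rhs => rw [← Multiset.filter_add_not (·.1 = w) G.E]
  simp only [Multiset.filter_add, Multiset.card_add, Multiset.filter_filter,
    filter_fst_eq_singleton h₂ hc₀, hkept, Multiset.filter_singleton]
  split_ifs <;> simp [add_comm]

theorem Suppress.outDeg_eq (hs : G.Suppress w G') (hy : y ≠ w) : G'.outDeg y = G.outDeg y := by
  obtain ⟨h₁, -, p₀, c₀, hp₀, -, -, hE⟩ := hs
  have hkept : G.E.filter (fun f => f.1 = y ∧ f.1 ≠ w ∧ f.2 ≠ w) =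
      G.E.filter (fun f => f.1 = y ∧ ¬ f.2 = w) :=
    Multiset.filter_congr fun f _ => by grind
  rw [outDeg, outDeg, hE, deleteVertex]
  conv_rhs => rw [← Multiset.filter_add_not (·.2 = w) G.E]
  simp only [Multiset.filter_add, Multiset.card_add, Multiset.filter_filter,
    filter_snd_eq_singleton h₁ hp₀, hkept, Multiset.filter_singleton]
  split_ifs <;> simp [add_comm]

theorem exists_suppress (h₁ : G.inDeg y = 1) (h₂ : G.outDeg y = 1) :
    ∃ G', G.Suppress y G' := by
  obtain ⟨f, hf⟩ := Multiset.card_pos_iff_exists_mem.mp (h₁ ▸ one_pos : 0 < G.inDeg y)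
  obtain ⟨g, hg⟩ := Multiset.card_pos_iff_exists_mem.mp (h₂ ▸ one_pos : 0 < G.outDeg y)
  obtain ⟨hfE, rfl⟩ := Multiset.mem_filter.mp hf
  obtain ⟨hgE, hg₁⟩ := Multiset.mem_filter.mp hg
  refine ⟨⟨G.V.erase f.2, (G.deleteVertex f.2).E + {(f.1, g.2)}⟩, h₁, h₂, f.1, g.2, hfE,
    ?_, rfl, rfl⟩
  simpa [← hg₁] using hgE

theorem SimpStep.V_subset (h : SimpStep G G') : G'.V ⊆ G.V := by
  rcases h with ⟨w, _, _, _, _, _, _, hV, _⟩ | ⟨e, _, hV, _⟩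
  · exact hV ▸ Finset.erase_subset w G.V
  · exact hV.subset

theorem SimpStep.inDeg_bounds (h : SimpStep G G') (hy : y ∈ G'.V) :
    min (G.inDeg y) 1 ≤ G'.inDeg y ∧ G'.inDeg y ≤ G.inDeg y := by
  rcases h with ⟨w, hs⟩ | ⟨e, hc, -, hE⟩
  · rw [hs.inDeg_eq (hs.ne_of_mem hy)]
    omega
  · have hcons := E_eq_cons_of_two_le_count hc hE
    have hdeg := inDeg_of_E_eq_cons hcons y
    have hcount : 1 ≤ G'.inDeg e.2 :=
      one_le_inDeg (mem_of_two_le_count hc hE (Multiset.count_pos.mp (by omega : 0 < G.E.count e)))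
    split_ifs at hdeg with he
    · subst he; omega
    · omega

theorem SimpStep.outDeg_bounds (h : SimpStep G G') (hy : y ∈ G'.V) :
    min (G.outDeg y) 1 ≤ G'.outDeg y ∧ G'.outDeg y ≤ G.outDeg y := by
  rcases h with ⟨w, hs⟩ | ⟨e, hc, -, hE⟩
  · rw [hs.outDeg_eq (hs.ne_of_mem hy)]
    omega
  · have hcons := E_eq_cons_of_two_le_count hc hE
    have hdeg := outDeg_of_E_eq_cons hcons y
    have hcount : 1 ≤ G'.outDeg e.1 :=
      one_le_outDeg (mem_of_two_le_count hc hE (Multiset.count_pos.mp (by omega : 0 < G.E.count e)))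
    split_ifs at hdeg with he
    · subst he; omega
    · omega

theorem V_subset_of_reflTransGen (h : Relation.ReflTransGen SimpStep G H) : H.V ⊆ G.V := by
  induction h with
  | refl => exact subset_rfl
  | tail _ st ih => exact st.V_subset.trans ih

theorem inDeg_bounds_of_reflTransGen (h : Relation.ReflTransGen SimpStep G H) (hy : y ∈ H.V) :
    min (G.inDeg y) 1 ≤ H.inDeg y ∧ H.inDeg y ≤ G.inDeg y := by
  induction h with
  | refl => omega
  | tail _ st ih =>
    have := st.inDeg_bounds hy
    have := ih (st.V_subset hy)
    omega

theorem outDeg_bounds_of_reflTransGen (h : Relation.ReflTransGen SimpStep G H) (hy : y ∈ H.V) :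
    min (G.outDeg y) 1 ≤ H.outDeg y ∧ H.outDeg y ≤ G.outDeg y := by
  induction h with
  | refl => omega
  | tail _ st ih =>
    have := st.outDeg_bounds hy
    have := ih (st.V_subset hy)
    omega

theorem mem_of_reflTransGen (h : Relation.ReflTransGen SimpStep G H) (hy : y ∈ G.V)
    (h₀ : G.inDeg y = 0 ∨ G.outDeg y = 0) : y ∈ H.V := by
  induction h with
  | refl => exact hy
  | tail hrun st ih =>
    rcases st with ⟨w, hs⟩ | ⟨e, -, hV, -⟩
    · refine hs.mem_V ih ?_
      rintro rfl
      have := inDeg_bounds_of_reflTransGen hrun ih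
      have := outDeg_bounds_of_reflTransGen hrun ih
      have := hs.1
      have := hs.2.1
      omega
    · exact hV ▸ ih

theorem not_mem_of_reflTransGen (h : Relation.ReflTransGen SimpStep G H)
    (hterm : ∀ H', ¬ SimpStep H H') (h₁ : G.inDeg y = 1) (h₂ : G.outDeg y = 1) :
    y ∉ H.V := by
  intro hy
  have := inDeg_bounds_of_reflTransGen h hy
  have := outDeg_bounds_of_reflTransGen h hy
  obtain ⟨H', hs⟩ := exists_suppress (G := H) (y := y) (by omega) (by omega)
  exact hterm H' (Or.inl ⟨y, hs⟩)

/-- The path from `r` to `x` avoiding `v` is what keeps `v` from being the only child of `r`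
once parallel arcs merge. -/
def ReticulationIntact (G : Digraph' α) (r x p v : α) : Prop :=
  v ∈ G.V ∧ (p, v) ∈ G.E ∧ G.inDeg v = 2 ∧ G.outDeg v = 1 ∧
    Relation.ReflTransGen (fun a b => (a, b) ∈ G.E ∧ b ≠ v) r x

namespace ReticulationIntact

theorem suppress (hI : G.ReticulationIntact r x p v) (hs : G.Suppress w G') (hrw : r ≠ w)
    (hxw : x ≠ w) (hpw : p ≠ w) : G'.ReticulationIntact r x p v := by
  obtain ⟨hv, hpv, hin, hout, hpath⟩ := hI
  have hvw : v ≠ w := by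
    rintro rfl
    have := hs.1
    omega
  refine ⟨hs.mem_V hv hvw, hs.mem_E hpv hpw hvw, (hs.inDeg_eq hvw).trans hin,
    (hs.outDeg_eq hvw).trans hout, hpath.of_bypass ?_ ?_ hrw hxw⟩
  · exact fun a b ha hb hab => ⟨hs.mem_E hab.1 ha hb, hab.2⟩
  · exact fun a b _ _ haw hwb => ⟨hs.mem_E_of_bypass haw.1 hwb.1, hwb.2⟩

theorem erase (hI : G.ReticulationIntact r x p v) (hc : 2 ≤ G.E.count e) (hV : G'.V = G.V)
    (hE : G'.E = G.E.erase e) (he : e ≠ (p, v)) : G'.ReticulationIntact r x p v := by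
  obtain ⟨hv, hpv, hin, hout, hpath⟩ := hI
  have hcons := E_eq_cons_of_two_le_count hc hE
  have he₂ : e.2 ≠ v := by
    intro h
    have hpe : (p, e.2) = e :=
      eq_of_inDeg_le_count (by rw [h, hin]; exact hc) (by rw [h]; exact hpv)
    exact he (by rw [← hpe, h])
  have he₁ : e.1 ≠ v := by
    intro h
    have := count_le_outDeg (G := G) e
    rw [h] at this
    omega
  have hin' := inDeg_of_E_eq_cons hcons v
  have hout' := outDeg_of_E_eq_cons hcons v
  rw [if_neg he₂] at hin'
  rw [if_neg he₁] at hout'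
  exact ⟨hV ▸ hv, mem_of_two_le_count hc hE hpv, by omega, by omega,
    Relation.ReflTransGen.mono (fun a b hab => ⟨mem_of_two_le_count hc hE hab.1, hab.2⟩) _ _
      hpath⟩

theorem count_lt_two (hI : G.ReticulationIntact r x p v) (hx : G.outDeg x = 0)
    (hout : G.outDeg p ≤ 2) (hdeg : G.inDeg p + G.outDeg p ≤ 3)
    (hin : p ≠ r → 1 ≤ G.inDeg p) (hE : G'.E = G.E.erase (p, v))
    (hrun : Relation.ReflTransGen SimpStep G' H) (hterm : ∀ H', ¬ SimpStep H H')
    (hpH : p ∈ H.V) : G.E.count (p, v) < 2 := by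
  obtain ⟨-, hpv, hvin, -, hpath⟩ := hI
  by_contra! hc
  have hcount : G.E.count (p, v) ≤ G.outDeg p := count_le_outDeg (p, v)
  by_cases hpr : p = r
  · subst hpr
    have hpx : p ≠ x := by
      rintro rfl
      have := one_le_outDeg hpv
      omega
    obtain ⟨b, ⟨hpb, hbv⟩, -⟩ := hpath.cases_head.resolve_left hpx
    have hall : G.outDeg p ≤ G.E.count (p, v) := by omega
    exact hbv (Prod.mk.inj (eq_of_outDeg_le_count (e := (p, v)) hall hpb)).2
  · have hcons := E_eq_cons_of_two_le_count hc hE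
    have hin' := inDeg_of_E_eq_cons hcons p
    have hout' := outDeg_of_E_eq_cons hcons p
    have hvp : v ≠ p := by
      rintro rfl
      omega
    rw [if_neg hvp] at hin'
    rw [if_pos rfl] at hout'
    have := hin hpr
    exact not_mem_of_reflTransGen hrun hterm (by omega) (by omega) hpH

theorem simpStep (hI : G.ReticulationIntact r x p v) (hst : SimpStep G G')
    (hrun : Relation.ReflTransGen SimpStep G' H) (hterm : ∀ H', ¬ SimpStep H H')
    (hrH : r ∈ H.V) (hxH : x ∈ H.V) (hpH : p ∈ H.V) (hx : G.outDeg x = 0)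
    (hout : G.outDeg p ≤ 2) (hdeg : G.inDeg p + G.outDeg p ≤ 3)
    (hin : p ≠ r → 1 ≤ G.inDeg p) : G'.ReticulationIntact r x p v := by
  have hV := V_subset_of_reflTransGen hrun
  rcases hst with ⟨w, hs⟩ | ⟨e, hc, hV', hE⟩
  · exact hI.suppress hs (hs.ne_of_mem (hV hrH)) (hs.ne_of_mem (hV hxH))
      (hs.ne_of_mem (hV hpH))
  · obtain rfl | he := eq_or_ne e (p, v)
    · exact absurd hc (not_le.mpr (hI.count_lt_two hx hout hdeg hin hE hrun hterm hpH))
    · exact hI.erase hc hV' hE he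

theorem reflTransGen (hI : G.ReticulationIntact r x p v)
    (hrun : Relation.ReflTransGen SimpStep G H) (hterm : ∀ H', ¬ SimpStep H H')
    (hrH : r ∈ H.V) (hxH : x ∈ H.V) (hpH : p ∈ H.V) (hx : G.outDeg x = 0)
    (hout : G.outDeg p ≤ 2) (hdeg : G.inDeg p + G.outDeg p ≤ 3)
    (hin : p ≠ r → 1 ≤ G.inDeg p) : H.ReticulationIntact r x p v := by
  suffices ∀ G', Relation.ReflTransGen SimpStep G G' → Relation.ReflTransGen SimpStep G' H →
      G'.ReticulationIntact r x p v from this H hrun .refl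
  intro G' hG hG'H
  induction hG with
  | refl => exact hI
  | @tail G₁ G₂ hG st ih =>
    have hrun₁ : Relation.ReflTransGen SimpStep G₁ H := .head st hG'H
    have hp₁ := V_subset_of_reflTransGen hrun₁ hpH
    have := inDeg_bounds_of_reflTransGen hG hp₁
    have := outDeg_bounds_of_reflTransGen hG hp₁
    have := outDeg_bounds_of_reflTransGen hG (V_subset_of_reflTransGen hrun₁ hxH)
    refine (ih hrun₁).simpStep st hG'H hterm hrH hxH hpH (by omega) (by omega) (by omega) ?_
    intro hpr
    have := hin hpr
    omega

end ReticulationIntact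

end Digraph'

namespace PhyloNet

open Digraph'

variable {α : Type*} [DecidableEq α] (N : PhyloNet α) {A : Finset α} {p r v x : α}

theorem outDeg_eq_zero_of_mem_X (hx : x ∈ N.X) : N.G.outDeg x = 0 := by
  obtain rfl : ‹DecidableEq α› = fun a b => Classical.propDecidable (a = b) :=
    Subsingleton.elim _ _
  rcases N.binary with ⟨-, hE, -⟩ | ⟨-, -, hX, -⟩
  · simp [outDeg, hE]
  · exact (hX x hx).2.2

theorem outDeg_le_two_and_inDeg_add_outDeg_le_three (hv : v ∈ N.G.V) :
    N.G.outDeg v ≤ 2 ∧ N.G.inDeg v + N.G.outDeg v ≤ 3 := by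
  obtain rfl : ‹DecidableEq α› = fun a b => Classical.propDecidable (a = b) :=
    Subsingleton.elim _ _
  rcases N.binary with ⟨-, hE, -⟩ | ⟨hr₀, hr₂, hX, -, hint⟩
  · simp [inDeg, outDeg, hE]
  · by_cases hvr : v = N.root
    · subst hvr
      omega
    by_cases hvX : v ∈ N.X
    · have := hX v hvX
      omega
    · rcases hint v hv hvr hvX with h | h <;> omega

theorem inDeg_pathGraph_eq (hSA : N.G.StableAncestor N.root A r)
    (hv : v ∈ (N.G.pathGraph r A).V) (hvr : v ≠ r) :
    (N.G.pathGraph r A).inDeg v = N.G.inDeg v := by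
  obtain ⟨-, x, hx, π, hπ, hvπ⟩ := mem_pathGraph_V.mp hv
  obtain ⟨s, t, hst⟩ := List.append_of_mem hvπ
  obtain ⟨hrv, hvx⟩ := hπ.split hst
  have hrσ : r ∉ v :: t := fun hr => by
    obtain ⟨s', t', hst'⟩ := List.append_of_mem hr
    exact N.acyclic.not_reaches_of_reaches ⟨_, hrv⟩ hvr.symm ⟨_, (hvx.split hst').1⟩
  -- a path from the root through an in-arc `(q, v)` and then along `π` must pass `r` before `q`
  have hall : ∀ e ∈ N.G.E, e.2 = v → e ∈ (N.G.pathGraph r A).E := by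
    rintro ⟨q, v'⟩ hq (rfl : v' = v)
    obtain ⟨R, hR⟩ := N.reach q (N.wf _ hq).1
    have hrR := (List.mem_append.mp (hSA x hx _ (hR.append hvx hq))).resolve_right hrσ
    obtain ⟨s', t', hst'⟩ := List.append_of_mem hrR
    have hrq := (hR.split hst').2
    obtain ⟨L, hL⟩ := hrq.eq_concat
    exact (hrq.append hvx hq).mem_pathGraph_E hx
      (List.mem_zip_tail_iff.mpr ⟨L, t, by simp [hL]⟩)
  rw [inDeg, inDeg, pathGraph, Multiset.filter_filter]
  exact congrArg _ (Multiset.filter_congr fun e he =>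
    ⟨fun h => h.1, fun h => ⟨h, (mem_pathGraph_E.mp (hall e he h)).2⟩⟩)

theorem parent_arc_mem_pathGraph (hA : A ⊆ N.X) (hLSA : N.G.IsLowestSA N.root A r)
    (hp : (p, v) ∈ N.G.E) (hpPG : p ∈ (N.G.pathGraph r A).V)
    (h11 : ¬ ((N.G.pathGraph r A).inDeg p = 1 ∧ (N.G.pathGraph r A).outDeg p = 1)) :
    (p, v) ∈ (N.G.pathGraph r A).E := by
  by_contra hpv
  have hpV : p ∈ N.G.V := (N.wf _ hp).1
  have hpA : p ∉ A := fun h => by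
    have := N.outDeg_eq_zero_of_mem_X (hA h)
    have := one_le_outDeg hp
    omega
  obtain ⟨z, hz⟩ := exists_mem_pathGraph_E hpPG hpA
  have hle : (N.G.pathGraph r A).E ≤ N.G.E := pathGraph_E_le
  have hzN := Multiset.mem_of_le hle hz
  have hzv : z ≠ v := by
    rintro rfl
    exact hpv hz
  obtain ⟨hout, hdeg⟩ := N.outDeg_le_two_and_inDeg_add_outDeg_le_three hpV
  have := two_le_outDeg hzN hp hzv
  by_cases hpr : p = r
  · subst hpr
    have hzSA : N.G.StableAncestor N.root A z :=
      hLSA.1.of_forall_pathGraph_E hpA fun z' hz' =>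
        (eq_or_eq_of_outDeg_le_two hout hzN hp hzv (Multiset.mem_of_le hle hz')).resolve_right
          (by rintro rfl; exact hpv hz')
    exact hLSA.2 z hzSA (N.acyclic.ne_of_mem_E hzN hpV).symm
      ⟨_, (pathFrom_singleton hpV).append (pathFrom_singleton (N.wf _ hzN).2) hzN⟩
  · have := one_le_inDeg_pathGraph hpPG hpr
    have := inDeg_le_of_E_le hle p
    have := one_le_outDeg hz
    have := outDeg_lt_of_E_le hle hp hpv
    exact h11 ⟨by omega, by omega⟩

theorem reticulationIntact_pathGraph (hA : A ⊆ N.X) (hLSA : N.G.IsLowestSA N.root A r)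
    (hret : N.G.inDeg v = 2 ∧ N.G.outDeg v = 1) (hpv : (p, v) ∈ (N.G.pathGraph r A).E) :
    ∃ x ∈ A, x ∈ (N.G.pathGraph r A).V ∧
      (N.G.pathGraph r A).ReticulationIntact r x p v := by
  have hvPG := mem_pathGraph_V_of_mem_E hpv
  have hvr : v ≠ r := by
    rintro rfl
    have := one_le_inDeg hpv
    rw [inDeg_pathGraph_self N.acyclic] at this
    omega
  have hvA : v ∉ A := fun h => by
    have := N.outDeg_eq_zero_of_mem_X (hA h)
    omega
  obtain ⟨z, hz⟩ := exists_mem_pathGraph_E hvPG hvA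
  obtain ⟨x, hx, q, hq, hvq⟩ :=
    hLSA.exists_pathFrom_not_mem (reaches_of_mem_pathGraph_V hvPG) hvr
  have := outDeg_le_of_E_le (pathGraph_E_le (G := N.G) (r := r) (A := A)) v
  have := one_le_outDeg hz
  exact ⟨x, hx, hq.mem_pathGraph_V hx hq.mem_right, hvPG, hpv,
    (N.inDeg_pathGraph_eq hLSA.1 hvPG hvr).trans hret.1, by omega,
    (hq.pathGraph hx).reflTransGen_avoiding hvq⟩

end PhyloNet

/-- if a parent of a reticulation `v` is a vertex of the
exhibited network `N_A`, then so is `v`. -/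
theorem retic_mem_exhibited_of_parent_mem
    {α : Type*} [DecidableEq α] (N : PhyloNet α) (A : Finset α)
    (hA : A ⊆ N.X) (v p : α)
    (hret : N.G.inDeg v = 2 ∧ N.G.outDeg v = 1)
    (hp : (p, v) ∈ N.G.E)
    (H : Digraph' α) (hH : N.Exhibits A H) (hpv : p ∈ H.V) :
    v ∈ H.V := by
  obtain ⟨r, hLSA, hrun, hterm⟩ := hH
  have hle : (N.G.pathGraph r A).E ≤ N.G.E := Digraph'.pathGraph_E_le
  have hpPG : p ∈ (N.G.pathGraph r A).V := Digraph'.V_subset_of_reflTransGen hrun hpv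
  have hpvPG := N.parent_arc_mem_pathGraph hA hLSA hp hpPG fun h11 =>
    Digraph'.not_mem_of_reflTransGen hrun hterm h11.1 h11.2 hpv
  obtain ⟨x, hxA, hxPG, hI⟩ := N.reticulationIntact_pathGraph hA hLSA hret hpvPG
  have hx : (N.G.pathGraph r A).outDeg x = 0 :=
    Nat.eq_zero_of_le_zero
      (N.outDeg_eq_zero_of_mem_X (hA hxA) ▸ Digraph'.outDeg_le_of_E_le hle x)
  have hrH := Digraph'.mem_of_reflTransGen hrun (Digraph'.mem_pathGraph_V_self hxPG)
    (Or.inl (Digraph'.inDeg_pathGraph_self N.acyclic))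
  have hxH := Digraph'.mem_of_reflTransGen hrun hxPG (Or.inr hx)
  obtain ⟨hout, hdeg⟩ := N.outDeg_le_two_and_inDeg_add_outDeg_le_three (v := p) (N.wf _ hp).1
  have := Digraph'.inDeg_le_of_E_le hle p
  have := Digraph'.outDeg_le_of_E_le hle p
  exact (hI.reflTransGen hrun hterm hrH hxH hpv hx (by omega) (by omega)
    fun hpr => Digraph'.one_le_inDeg_pathGraph hpPG hpr).1
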